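/- arXiv:2107.07703 — 4 statements merged into one kernel-verified Lean document; each statement's English description precedes it below -/
import Mathlib

section
/- Let S be a nonempty finite set, r : S → (0,1] with distinct values p₁ < ... < pₙ (p₀ := 0), q a real-valued function on subsets of S with q(∅) = 0, and write q_i := q(D(S;p_i,r)) where D(S;u,r) = {s ∈ S : u < r(s)}. Define the estimator on a nonempty sampled set obtained with U ∈ [p_i, p_{i+1}) as ê = Σ_{j=i+1}^{n} (q_{j−1} − q_j)/p_j, and ê = 0 when U ≥ pₙ. Then for U uniform on [0,1), E[ê] = q(S). -/
/-!
On the event `U ∈ [p i, p (i+1))` the estimator is the tail `∑_{j > i} (q_{j-1} - q_j) / p_j`,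
so it is the sum over `j` of `(q_{j-1} - q_j) / p_j` times the indicator of `U < p_j`. Each such
term has expectation exactly `q_{j-1} - q_j`, and the expectations telescope to `q_0 - q_n`.
Since `p_0 = 0 < r` on `S`, the level-`p_0` subset is `S` itself, and since `p_n` is the largest
rate, the level-`p_n` subset is empty, where `q` vanishes.
-/

open MeasureTheory

lemma ite_lt_const_eq_indicator (a c : ℝ) :
    (fun u : ℝ => if u < a then c else 0) = (Set.Iio a).indicator (fun _ => c) := by
  funext u
  by_cases h : u < a <;> simp [Set.indicator, h]

lemma integrableOn_Ico_ite_lt_const (a b c : ℝ) :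
    IntegrableOn (fun u : ℝ => if u < a then c else 0) (Set.Ico 0 b) := by
  rw [ite_lt_const_eq_indicator]
  exact (integrableOn_const (by simp) (by simp)).indicator measurableSet_Iio

lemma setIntegral_Ico_ite_lt_const {a b : ℝ} (c : ℝ) (ha : 0 ≤ a) (hab : a ≤ b) :
    ∫ u in Set.Ico 0 b, (if u < a then c else 0) = a * c := by
  rw [ite_lt_const_eq_indicator, setIntegral_indicator measurableSet_Iio, Set.Ico_inter_Iio,
    min_eq_right hab, setIntegral_const]
  simp [ha]

theorem setIntegral_sum_ite_lt_div_eq_sub (n : ℕ) (a f : ℕ → ℝ)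
    (ha : ∀ j < n, a (j + 1) ∈ Set.Ioc 0 1) :
    ∫ u in Set.Ico (0 : ℝ) 1,
        ∑ j ∈ Finset.range n, (if u < a (j + 1) then (f j - f (j + 1)) / a (j + 1) else 0)
      = f 0 - f n := by
  have hterm : ∀ j ∈ Finset.range n,
      ∫ u in Set.Ico (0 : ℝ) 1, (if u < a (j + 1) then (f j - f (j + 1)) / a (j + 1) else 0)
        = f j - f (j + 1) := by
    intro j hj
    obtain ⟨hpos, hle⟩ := ha j (Finset.mem_range.1 hj)
    rw [setIntegral_Ico_ite_lt_const _ hpos.le hle]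
    exact mul_div_cancel₀ _ hpos.ne'
  rw [integral_finsetSum _ fun j _ => integrableOn_Ico_ite_lt_const _ _ _,
    Finset.sum_congr rfl hterm, Finset.sum_range_sub']

theorem stmt_2_general {α : Type*} [DecidableEq α] (S : Finset α)
    (r : α → ℝ) (hr : ∀ s ∈ S, r s ∈ Set.Ioc (0 : ℝ) 1)
    (n : ℕ) (p : ℕ → ℝ) (hp0 : p 0 = 0)
    (hmono : ∀ i < n, p i < p (i + 1))
    (himg : S.image r = (Finset.range n).image (fun j => p (j + 1)))
    (q : Finset α → ℝ) (hq0 : q (∅ : Finset α) = 0) :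
    (∫ u in Set.Ico (0 : ℝ) 1,
        ∑ j ∈ Finset.range n,
          if u < p (j + 1) then
            (q (S.filter (fun s => p j < r s)) - q (S.filter (fun s => p (j + 1) < r s)))
              / p (j + 1)
          else 0)
      = q S := by
  have hrate : ∀ j < n, ∃ s ∈ S, r s = p (j + 1) := fun j hj =>
    Finset.mem_image.1 (himg ▸ Finset.mem_image_of_mem _ (Finset.mem_range.2 hj))
  have hp_mono : MonotoneOn p (Set.Iic n) := (strictMonoOn_Iic_of_lt_succ hmono).monotoneOn
  have hlevel_zero : S.filter (fun s => p 0 < r s) = S :=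
    Finset.filter_true_of_mem fun s hs => hp0 ▸ (hr s hs).1
  have hlevel_top : S.filter (fun s => p n < r s) = ∅ := by
    refine Finset.filter_eq_empty_iff.2 fun s hs => not_lt.2 ?_
    obtain ⟨k, hk, hks⟩ := Finset.mem_image.1 (himg ▸ Finset.mem_image_of_mem r hs)
    have hk : k + 1 ≤ n := Finset.mem_range.1 hk
    exact hks ▸ hp_mono (Set.mem_Iic.2 hk) (Set.mem_Iic.2 le_rfl) hk
  rw [setIntegral_sum_ite_lt_div_eq_sub n p (fun j => q (S.filter fun s => p j < r s))
      fun j hj => by obtain ⟨s, hs, hrs⟩ := hrate j hj; exact hrs ▸ hr s hs,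
    hlevel_zero, hlevel_top, hq0, sub_zero]

/-- Unbiasedness of the new estimator: with `p 1 < ⋯ < p n` the distinct values of `r` on `S`,
`p 0 = 0`, and `q ∅ = 0`, the estimator equal to
`∑_{j : U < p (j+1)} (q (D(S;p j,r)) - q (D(S;p (j+1),r))) / p (j+1)`
(which is `∑_{j=i+1}^n (q_{j-1} - q_j)/p_j` on the event `U ∈ [p i, p (i+1))`, and `0`
when `U ≥ p n`) has expectation `q S` for `U` uniform on `[0,1)`. -/
theorem stmt_2 {α : Type*} [DecidableEq α] (S : Finset α) (hS : S.Nonempty)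
    (r : α → ℝ) (hr : ∀ s ∈ S, r s ∈ Set.Ioc (0 : ℝ) 1)
    (n : ℕ) (hn : 1 ≤ n) (p : ℕ → ℝ) (hp0 : p 0 = 0)
    (hmono : ∀ i < n, p i < p (i + 1))
    (himg : S.image r = (Finset.range n).image (fun j => p (j + 1)))
    (q : Finset α → ℝ) (hq0 : q (∅ : Finset α) = 0) :
    (∫ u in Set.Ico (0 : ℝ) 1,
        ∑ j ∈ Finset.range n,
          if u < p (j + 1) then
            (q (S.filter (fun s => p j < r s)) - q (S.filter (fun s => p (j + 1) < r s)))
              / p (j + 1)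
          else 0)
      = q S :=
  stmt_2_general S r hr n p hp0 hmono himg q hq0
end

section
/- With the setup of the unbiasedness lemma (S nonempty finite, r : S → (0,1] with distinct values p₁ < ... < pₙ, p₀ := 0, q_i := q(D(S;p_i,r)), q(∅) = 0, and estimator ê equal to Σ_{j=i+1}^{n} (q_{j−1} − q_j)/p_j on the event U ∈ [p_i, p_{i+1}) and 0 on U ≥ pₙ), the variance of ê under U uniform on [0,1) equals q₀²(1/pₙ − 1) + Σ_{j=1}^{n−1} (q₀ − q_j)²(1/p_j − 1/p_{j+1}), where q₀ = q(S). -/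
/-!
As a function of `u`, the estimator is a step function: on `[p i, p (i + 1))` it equals the tail
sum `a i = ∑_{j ≥ i} (q_j - q_{j+1}) / p_{j+1}`, and it vanishes on `[p n, 1)`. Hence the variance
is the finite sum `∑ (a i - q₀)² (p (i + 1) - p i) + q₀² (1 - p n)`. With `d j = q₀ - q_j` the
tail sums satisfy `d (j + 1) - d j = p (j + 1) (a j - a (j + 1))`, and induction on the number of
steps gives the first two moments `∑ a i Δp i = d n` and
`∑ a i² Δp i = d n² / p n + ∑ d j² (1 / p j - 1 / p (j + 1))`; expanding the square finishes.
-/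

open MeasureTheory Finset

section StepIntegral

variable {f : ℝ → ℝ}

lemma intervalIntegrable_of_eqOn_Ico {a b c : ℝ} (hab : a ≤ b)
    (hf : Set.EqOn f (fun _ => c) (Set.Ico a b)) : IntervalIntegrable f volume a b := by
  rw [intervalIntegrable_iff_integrableOn_Ico_of_le hab]
  exact (integrableOn_const measure_Ico_lt_top.ne).congr_fun hf.symm measurableSet_Ico

lemma intervalIntegral_of_eqOn_Ico {a b c : ℝ} (hab : a ≤ b)
    (hf : Set.EqOn f (fun _ => c) (Set.Ico a b)) : ∫ x in a..b, f x = c * (b - a) := by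
  rw [intervalIntegral.integral_of_le hab, ← integral_Ico_eq_integral_Ioc,
    setIntegral_congr_fun measurableSet_Ico hf, setIntegral_const, Real.volume_real_Ico_of_le hab,
    smul_eq_mul, mul_comm]

lemma intervalIntegral_eq_sum_of_eqOn_Ico {p v : ℕ → ℝ} {n : ℕ} (hp : ∀ i < n, p i ≤ p (i + 1))
    (hf : ∀ i < n, Set.EqOn f (fun _ => v i) (Set.Ico (p i) (p (i + 1)))) :
    IntervalIntegrable f volume (p 0) (p n) ∧
      ∫ x in p 0..p n, f x = ∑ i ∈ range n, v i * (p (i + 1) - p i) := by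
  have hint i (hi : i < n) := intervalIntegrable_of_eqOn_Ico (hp i hi) (hf i hi)
  refine ⟨IntervalIntegrable.trans_iterate hint, ?_⟩
  rw [← intervalIntegral.sum_integral_adjacent_intervals hint]
  exact sum_congr rfl fun i hi =>
    intervalIntegral_of_eqOn_Ico (hp i (mem_range.1 hi)) (hf i (mem_range.1 hi))

end StepIntegral

section TailSum

variable {p : ℕ → ℝ} {n : ℕ} (c : ℕ → ℝ)

lemma sum_ite_lt_eq_sum_Ico (hp : StrictMonoOn p (Set.Iic n)) {i : ℕ} (hi : i < n) {u : ℝ}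
    (hu : u ∈ Set.Ico (p i) (p (i + 1))) :
    ∑ j ∈ range n, (if u < p (j + 1) then c j else 0) = ∑ j ∈ Ico i n, c j := by
  rw [← sum_filter]
  congr 1
  ext j
  simp only [mem_filter, mem_range, mem_Ico]
  constructor
  · rintro ⟨hj, hlt⟩
    refine ⟨?_, hj⟩
    by_contra! hji
    have : p (j + 1) ≤ p i := hp.monotoneOn (by simp; omega) (by simp; omega) hji
    linarith [hu.1]
  · rintro ⟨hij, hj⟩
    exact ⟨hj, hu.2.trans_le (hp.monotoneOn (by simp; omega) (by simp; omega) (by omega))⟩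

lemma sum_ite_lt_eq_zero (hp : MonotoneOn p (Set.Iic n)) {u : ℝ} (hu : p n ≤ u) :
    ∑ j ∈ range n, (if u < p (j + 1) then c j else 0) = 0 :=
  sum_eq_zero fun j hj => by
    have hjn : j + 1 ≤ n := mem_range.1 hj
    exact if_neg (not_lt.2 ((hp (by simpa using hjn) (by simp) hjn).trans hu))

lemma setIntegral_Ico_comp_sum_ite_lt (g : ℝ → ℝ) (hp : StrictMonoOn p (Set.Iic n))
    (hp0 : p 0 = 0) (hpn : p n ≤ 1) :
    ∫ u in Set.Ico 0 1, g (∑ j ∈ range n, if u < p (j + 1) then c j else 0)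
      = ∑ i ∈ range n, g (∑ j ∈ Ico i n, c j) * (p (i + 1) - p i) + g 0 * (1 - p n) := by
  set f : ℝ → ℝ := fun u => g (∑ j ∈ range n, if u < p (j + 1) then c j else 0)
  have hpieces :
      ∀ i < n, Set.EqOn f (fun _ => g (∑ j ∈ Ico i n, c j)) (Set.Ico (p i) (p (i + 1))) :=
    fun i hi u hu => congrArg g (sum_ite_lt_eq_sum_Ico c hp hi hu)
  have htail : Set.EqOn f (fun _ => g 0) (Set.Ico (p n) 1) :=
    fun u hu => congrArg g (sum_ite_lt_eq_zero c hp.monotoneOn hu.1)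
  obtain ⟨hint, hsum⟩ := intervalIntegral_eq_sum_of_eqOn_Ico
    (fun i hi => hp.monotoneOn (by simp; omega) (by simp; omega) (by omega)) hpieces
  have hsplit := intervalIntegral.integral_add_adjacent_intervals hint
    (intervalIntegrable_of_eqOn_Ico hpn htail)
  rw [hsum, intervalIntegral_of_eqOn_Ico hpn htail, hp0,
    intervalIntegral.integral_of_le zero_le_one, ← integral_Ico_eq_integral_Ioc] at hsplit
  exact hsplit.symm

end TailSum

section Moments

variable {p a d : ℕ → ℝ} {n : ℕ}

lemma sum_mul_sub_eq (hp0 : p 0 = 0) (hd0 : d 0 = 0)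
    (hstep : ∀ k < n, d (k + 1) - d k = p (k + 1) * (a k - a (k + 1))) :
    ∑ i ∈ range n, a i * (p (i + 1) - p i) = d n + p n * a n := by
  induction n with
  | zero => simp [hp0, hd0]
  | succ n ih =>
    rw [sum_range_succ, ih fun k hk => hstep k (by omega)]
    linear_combination -hstep n n.lt_succ_self

-- The last three terms are `(d n + p n * a n) ^ 2 / p n`, expanded so that the statement also
-- holds at `n = 0`, where `p n = 0`.
lemma sum_sq_mul_sub_eq (hp0 : p 0 = 0) (hd0 : d 0 = 0) (hp : ∀ k < n, p (k + 1) ≠ 0)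
    (hstep : ∀ k < n, d (k + 1) - d k = p (k + 1) * (a k - a (k + 1))) :
    ∑ i ∈ range n, a i ^ 2 * (p (i + 1) - p i)
      = ∑ j ∈ range n, d j ^ 2 * (1 / p j - 1 / p (j + 1))
        + d n ^ 2 / p n + 2 * d n * a n + p n * a n ^ 2 := by
  induction n with
  | zero => simp [hp0, hd0]
  | succ n ih =>
    rw [sum_range_succ, sum_range_succ,
      ih (fun k hk => hp k (by omega)) fun k hk => hstep k (by omega),
      eq_add_of_sub_eq' (hstep n n.lt_succ_self)]
    field_simp [hp n n.lt_succ_self]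
    ring

end Moments

lemma sum_tail_sub_sq_mul_sub_eq {p : ℕ → ℝ} {n : ℕ} (hp0 : p 0 = 0)
    (hp : ∀ k < n, p (k + 1) ≠ 0) (Q : ℕ → ℝ) (hQn : Q n = 0) :
    ∑ i ∈ range n, (∑ j ∈ Ico i n, (Q j - Q (j + 1)) / p (j + 1) - Q 0) ^ 2 * (p (i + 1) - p i)
        + Q 0 ^ 2 * (1 - p n)
      = Q 0 ^ 2 * (1 / p n - 1) + ∑ j ∈ Ico 1 n, (Q 0 - Q j) ^ 2 * (1 / p j - 1 / p (j + 1)) := by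
  set a : ℕ → ℝ := fun i => ∑ j ∈ Ico i n, (Q j - Q (j + 1)) / p (j + 1)
  set d : ℕ → ℝ := fun j => Q 0 - Q j
  have hd0 : d 0 = 0 := sub_self _
  have hstep : ∀ k < n, d (k + 1) - d k = p (k + 1) * (a k - a (k + 1)) := fun k hk => by
    simp only [a, d, sum_eq_sum_Ico_succ_bot hk, add_sub_cancel_right, mul_div_cancel₀ _ (hp k hk)]
    ring
  have hexpand : ∑ i ∈ range n, (a i - Q 0) ^ 2 * (p (i + 1) - p i)
      = ∑ i ∈ range n, a i ^ 2 * (p (i + 1) - p i)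
        - 2 * Q 0 * ∑ i ∈ range n, a i * (p (i + 1) - p i)
        + Q 0 ^ 2 * ∑ i ∈ range n, (p (i + 1) - p i) := by
    simp only [mul_sum, ← sum_sub_distrib, ← sum_add_distrib]
    exact sum_congr rfl fun _ _ => by ring
  have hIco : ∑ j ∈ range n, d j ^ 2 * (1 / p j - 1 / p (j + 1))
      = ∑ j ∈ Ico 1 n, d j ^ 2 * (1 / p j - 1 / p (j + 1)) := by
    refine (sum_subset (fun j hj => mem_range.2 (mem_Ico.1 hj).2) fun j hj hj' => ?_).symm
    obtain rfl : j = 0 := by simp only [mem_range, mem_Ico, not_and, not_lt] at hj hj'; omega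
    simp [hd0]
  rw [hexpand, sum_sq_mul_sub_eq hp0 hd0 hp hstep, sum_mul_sub_eq hp0 hd0 hstep, sum_range_sub,
    hp0, hIco]
  simp only [a, d, Ico_self, sum_empty, hQn]
  ring

theorem stmt_3_general {α : Type*} (S : Finset α)
    (r : α → ℝ) (hr : ∀ s ∈ S, r s ∈ Set.Ioc (0 : ℝ) 1)
    (n : ℕ) (p : ℕ → ℝ) (hp0 : p 0 = 0)
    (hmono : ∀ i < n, p i < p (i + 1))
    (himg : S.image r = (Finset.range n).image (fun j => p (j + 1)))
    (q : Finset α → ℝ) (hq0 : q (∅ : Finset α) = 0) :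
    (∫ u in Set.Ico (0 : ℝ) 1,
        ((∑ j ∈ Finset.range n,
          if u < p (j + 1) then
            (q (S.filter (fun s => p j < r s)) - q (S.filter (fun s => p (j + 1) < r s)))
              / p (j + 1)
          else 0) - q S) ^ 2)
      = q S ^ 2 * (1 / p n - 1)
        + ∑ j ∈ Finset.Ico 1 n,
            (q S - q (S.filter (fun s => p j < r s))) ^ 2 * (1 / p j - 1 / p (j + 1)) := by
  have hp : StrictMonoOn p (Set.Iic n) := strictMonoOn_Iic_of_lt_succ hmono
  have hpn : p n ≤ 1 := by
    rcases n.eq_zero_or_pos with rfl | hn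
    · exact hp0.trans_le zero_le_one
    have hpn_mem : p n ∈ S.image r := by
      rw [himg]
      exact mem_image.2
        ⟨n - 1, mem_range.2 (n.sub_lt hn one_pos), congrArg p (Nat.succ_pred_eq_of_pos hn)⟩
    obtain ⟨s, hs, hrs⟩ := mem_image.1 hpn_mem
    exact hrs ▸ (hr s hs).2
  have hQ0 : q (S.filter fun s => p 0 < r s) = q S := by
    rw [filter_true_of_mem fun s hs => hp0 ▸ (hr s hs).1]
  have hQn : S.filter (fun s => p n < r s) = ∅ := by
    refine filter_eq_empty_iff.2 fun s hs => ?_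
    obtain ⟨j, hj, hjs⟩ : ∃ j < n, p (j + 1) = r s := by
      simpa [himg] using mem_image_of_mem r hs
    exact not_lt.2 (hjs ▸ hp.monotoneOn (by simpa using hj) (by simp) hj)
  have hpos : ∀ k < n, p (k + 1) ≠ 0 := fun k hk =>
    (hp0 ▸ hp (by simp) (by simpa using hk) k.succ_pos).ne'
  refine (setIntegral_Ico_comp_sum_ite_lt _ (fun x => (x - q S) ^ 2) hp hp0 hpn).trans ?_
  rw [zero_sub, neg_sq, ← hQ0]
  exact sum_tail_sub_sq_mul_sub_eq hp0 hpos (fun j => q (S.filter fun s => p j < r s))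
    (by rw [hQn, hq0])

/-- Variance of the new estimator: with the setup of the unbiasedness lemma,
`Var[ê] = q(S)²(1/pₙ − 1) + ∑_{j=1}^{n−1} (q(S) − q(D(S;p_j,r)))²(1/p_j − 1/p_{j+1})`. -/
theorem stmt_3 {α : Type*} [DecidableEq α] (S : Finset α) (hS : S.Nonempty)
    (r : α → ℝ) (hr : ∀ s ∈ S, r s ∈ Set.Ioc (0 : ℝ) 1)
    (n : ℕ) (hn : 1 ≤ n) (p : ℕ → ℝ) (hp0 : p 0 = 0)
    (hmono : ∀ i < n, p i < p (i + 1))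
    (himg : S.image r = (Finset.range n).image (fun j => p (j + 1)))
    (q : Finset α → ℝ) (hq0 : q (∅ : Finset α) = 0) :
    (∫ u in Set.Ico (0 : ℝ) 1,
        ((∑ j ∈ Finset.range n,
          if u < p (j + 1) then
            (q (S.filter (fun s => p j < r s)) - q (S.filter (fun s => p (j + 1) < r s)))
              / p (j + 1)
          else 0) - q S) ^ 2)
      = q S ^ 2 * (1 / p n - 1)
        + ∑ j ∈ Finset.Ico 1 n,
            (q S - q (S.filter (fun s => p j < r s))) ^ 2 * (1 / p j - 1 / p (j + 1)) :=
  stmt_3_general S r hr n p hp0 hmono himg q hq0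
end

section
/- Suppose q is bounded, i.e., for every nonempty T ⊆ S, q(T) lies in the interval between 0 and 2q(S). Then the variance of the new estimator ê is at most the variance of the naive estimator ĝ; concretely, q(S)²(1/pₙ − 1) + Σ_{j=1}^{n−1} (q(S) − q(D(S;p_j,r)))² (1/p_j − 1/p_{j+1}) ≤ q(S)²(1/p₁ − 1), where p₁ < ... < pₙ are the distinct values of r on S. -/
/-- If `q` is bounded (for every nonempty `T ⊆ S`, `q T` lies between `0` and `2 q S`),
then the variance of the new estimator is at most the variance of the naive estimator:
`q(S)²(1/pₙ − 1) + ∑_{j=1}^{n−1} (q(S) − q(D(S;p_j,r)))²(1/p_j − 1/p_{j+1}) ≤ q(S)²(1/p₁ − 1)`. -/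
theorem stmt_5 {α : Type*} [DecidableEq α] (S : Finset α) (hS : S.Nonempty)
    (r : α → ℝ) (hr : ∀ s ∈ S, r s ∈ Set.Ioc (0 : ℝ) 1)
    (n : ℕ) (hn : 1 ≤ n) (p : ℕ → ℝ) (hp0 : p 0 = 0)
    (hmono : ∀ i < n, p i < p (i + 1))
    (himg : S.image r = (Finset.range n).image (fun j => p (j + 1)))
    (q : Finset α → ℝ)
    (hbound : ∀ T : Finset α, T ⊆ S → T.Nonempty →
      q T ∈ Set.Icc (min 0 (2 * q S)) (max 0 (2 * q S))) :
    q S ^ 2 * (1 / p n - 1)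
      + ∑ j ∈ Finset.Ico 1 n,
          (q S - q (S.filter (fun s => p j < r s))) ^ 2 * (1 / p j - 1 / p (j + 1))
      ≤ q S ^ 2 * (1 / p 1 - 1) := by
  -- existence of elements realizing values
  have hmem : ∀ k < n, ∃ s ∈ S, r s = p (k + 1) := by
    intro k hk
    have : p (k + 1) ∈ (Finset.range n).image (fun j => p (j + 1)) :=
      Finset.mem_image_of_mem _ (Finset.mem_range.mpr hk)
    rw [← himg] at this
    simpa using Finset.mem_image.mp this
  have hio : ∀ k < n, p (k + 1) ∈ Set.Ioc (0 : ℝ) 1 := by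
    intro k hk
    obtain ⟨s, hsS, hseq⟩ := hmem k hk
    rw [← hseq]; exact hr s hsS
  -- monotone chain
  have hle : ∀ j, j ≤ n → ∀ i ≤ j, p i ≤ p j := by
    intro j hj
    induction j with
    | zero =>
      intro i hi
      obtain rfl : i = 0 := by omega
      exact le_rfl
    | succ k ih =>
      intro i hi
      by_cases h : i ≤ k
      · exact le_trans (ih (by omega) i h) (le_of_lt (hmono k (by omega)))
      · have : i = k + 1 := by omega
        subst this; exact le_refl _
  -- squared deviation bound
  have hsq : ∀ T : Finset α, T ⊆ S → T.Nonempty → (q S - q T) ^ 2 ≤ q S ^ 2 := by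
    intro T hTS hTne
    obtain ⟨h1, h2⟩ := hbound T hTS hTne
    rcases le_total (q S) 0 with h | h
    · rw [max_eq_left (by linarith)] at h2
      rw [min_eq_right (by linarith)] at h1
      nlinarith
    · rw [max_eq_right (by linarith)] at h2
      rw [min_eq_left (by linarith)] at h1
      nlinarith
  -- per-term bound
  have hterm : ∀ j ∈ Finset.Ico 1 n,
      (q S - q (S.filter (fun s => p j < r s))) ^ 2 * (1 / p j - 1 / p (j + 1))
        ≤ q S ^ 2 * (1 / p j - 1 / p (j + 1)) := by
    intro j hj
    rw [Finset.mem_Ico] at hj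
    have hpj : p j ∈ Set.Ioc (0:ℝ) 1 := by
      have := hio (j - 1) (by omega)
      have hjj : j - 1 + 1 = j := by omega
      rwa [hjj] at this
    have hpj1 : p (j + 1) ∈ Set.Ioc (0:ℝ) 1 := hio j hj.2
    have hc : (0:ℝ) ≤ 1 / p j - 1 / p (j + 1) := by
      have h1 : p j ≤ p (j + 1) := le_of_lt (hmono j hj.2)
      have := hpj.1
      have := hpj1.1
      rw [sub_nonneg]
      exact one_div_le_one_div_of_le hpj.1 h1
    have hne : (S.filter (fun s => p j < r s)).Nonempty := by
      obtain ⟨s, hsS, hseq⟩ := hmem (n - 1) (by omega)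
      refine ⟨s, Finset.mem_filter.mpr ⟨hsS, ?_⟩⟩
      have h1 : p j < p (j + 1) := hmono j hj.2
      have h2 : p (j + 1) ≤ p n := by
        have hnn : n - 1 + 1 = n := by omega
        exact hle n le_rfl (j + 1) (by omega)
      have hnn : n - 1 + 1 = n := by omega
      rw [hseq, hnn]
      linarith
    exact mul_le_mul_of_nonneg_right (hsq _ (Finset.filter_subset _ _) hne) hc
  have hsum : ∑ j ∈ Finset.Ico 1 n,
      (q S - q (S.filter (fun s => p j < r s))) ^ 2 * (1 / p j - 1 / p (j + 1))
        ≤ ∑ j ∈ Finset.Ico 1 n, q S ^ 2 * (1 / p j - 1 / p (j + 1)) :=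
    Finset.sum_le_sum hterm
  -- telescoping
  have htel : ∑ j ∈ Finset.Ico 1 n, (1 / p j - 1 / p (j + 1)) = 1 / p 1 - 1 / p n := by
    rw [Finset.sum_Ico_eq_sum_range]
    have hnn : 1 + (n - 1) = n := by omega
    have h : ∑ j ∈ Finset.range (n - 1), (1 / p (1 + j) - 1 / p (1 + j + 1))
        = 1 / p (1 + 0) - 1 / p (1 + (n - 1)) :=
      Finset.sum_range_sub' (fun i => 1 / p (1 + i)) (n - 1)
    rw [h, hnn]
  calc q S ^ 2 * (1 / p n - 1)
      + ∑ j ∈ Finset.Ico 1 n,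
          (q S - q (S.filter (fun s => p j < r s))) ^ 2 * (1 / p j - 1 / p (j + 1))
      ≤ q S ^ 2 * (1 / p n - 1) + ∑ j ∈ Finset.Ico 1 n, q S ^ 2 * (1 / p j - 1 / p (j + 1)) := by
        linarith
    _ = q S ^ 2 * (1 / p n - 1) + q S ^ 2 * (1 / p 1 - 1 / p n) := by
        rw [← Finset.mul_sum, htel]
    _ = q S ^ 2 * (1 / p 1 - 1) := by ring
end

section
/- Suppose all sampling rates are reciprocals of positive integers (e.g., powers of 1/2) and q takes integer values on all subsets. Then the new estimator value Σ_{j=1}^{m} (q(D(T;p'_{j−1},r)) − q(D(T;p'_j,r)))/p'_j is an integer. -/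
theorem exists_intCast_eq_sum_div_of_forall_eq_one_div_natCast {ι : Type*} (s : Finset ι)
    (a : ι → ℤ) (x : ι → ℝ) (hx : ∀ i ∈ s, ∃ k : ℕ, x i = 1 / k) :
    ∃ z : ℤ, ∑ i ∈ s, (a i : ℝ) / x i = z := by
  obtain ⟨z, hz⟩ : ∑ i ∈ s, (a i : ℝ) / x i ∈ (Int.castRingHom ℝ).range :=
    Subring.sum_mem _ fun i hi => by
      obtain ⟨k, hk⟩ := hx i hi
      exact ⟨a i * k, by simp [hk]⟩
  exact ⟨z, hz.symm⟩

theorem stmt_15_general {α : Type*} (T : Finset α)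
    (r : α → ℝ)
    (hrecip : ∀ s ∈ T, ∃ k : ℕ, 0 < k ∧ r s = 1 / (k : ℝ))
    (m : ℕ) (p : ℕ → ℝ)
    (himg : T.image r = (Finset.range m).image (fun j => p (j + 1)))
    (q : Finset α → ℤ) :
    ∃ z : ℤ,
      (∑ j ∈ Finset.range m,
          ((q (T.filter (fun s => p j < r s)) : ℝ)
            - (q (T.filter (fun s => p (j + 1) < r s)) : ℝ)) / p (j + 1))
        = (z : ℝ) := by
  have hrate : ∀ j ∈ Finset.range m, ∃ k : ℕ, p (j + 1) = 1 / k := by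
    intro j hj
    obtain ⟨s, hs, hrs⟩ := Finset.mem_image.mp (himg ▸ Finset.mem_image_of_mem _ hj)
    obtain ⟨k, -, hk⟩ := hrecip s hs
    exact ⟨k, hrs ▸ hk⟩
  simpa using exists_intCast_eq_sum_div_of_forall_eq_one_div_natCast (Finset.range m)
    (fun j => q (T.filter (fun s => p j < r s)) - q (T.filter (fun s => p (j + 1) < r s)))
    (fun j => p (j + 1)) hrate

/-- If all sampling rates are reciprocals of positive integers and `q` takes integer values
(with `q ∅ = 0`), then the value of the new estimator is an integer. -/
theorem stmt_15 {α : Type*} [DecidableEq α] (T : Finset α) (hT : T.Nonempty)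
    (r : α → ℝ) (hr : ∀ s ∈ T, r s ∈ Set.Ioc (0 : ℝ) 1)
    (hrecip : ∀ s ∈ T, ∃ k : ℕ, 0 < k ∧ r s = 1 / (k : ℝ))
    (m : ℕ) (hm : 1 ≤ m) (p : ℕ → ℝ) (hp0 : p 0 = 0)
    (hmono : ∀ i < m, p i < p (i + 1))
    (himg : T.image r = (Finset.range m).image (fun j => p (j + 1)))
    (q : Finset α → ℤ) (hq0 : q (∅ : Finset α) = 0) :
    ∃ z : ℤ,
      (∑ j ∈ Finset.range m,
          ((q (T.filter (fun s => p j < r s)) : ℝ)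
            - (q (T.filter (fun s => p (j + 1) < r s)) : ℝ)) / p (j + 1))
        = (z : ℝ) :=
  stmt_15_general T r hrecip m p himg q
end
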